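/- arXiv:math/0107220 — 3 statements merged into one kernel-verified Lean document; each statement's English description precedes it below -/
import Mathlib

section
/- Let W(t) be a Hermitian matrix with entries Laurent polynomials over ℂ (i.e., W(t̄⁻¹)* = W(t) for |t|=1 means W(z) is a Hermitian complex matrix for each z on the unit circle). Let T^(p) be the p×p cyclic permutation matrix. Then the signature of the Hermitian matrix W(T^(p)) (obtained by substituting T^(p) for t, using that T^(p) is normal with unitary diagonalization) equals the sum over all p-th roots of unity ω of the signature of W(ω). -/
open Matrix Polynomial Finset
open scoped Kronecker

/-- The signature (number of positive minus number of negative eigenvalues, with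
multiplicity) of a Hermitian complex matrix; junk value 0 on non-Hermitian matrices. -/
noncomputable def sig {m : Type*} [Fintype m] [DecidableEq m] (A : Matrix m m ℂ) : ℤ :=
  if hA : A.IsHermitian then
    ((Finset.univ.filter fun i => 0 < hA.eigenvalues i).card : ℤ) -
      ((Finset.univ.filter fun i => hA.eigenvalues i < 0).card : ℤ)
  else 0

/-- The p×p cyclic permutation matrix. -/
def cyclicMatrix (p : ℕ) : Matrix (Fin p) (Fin p) ℂ :=
  fun i j => if (j : ℕ) = ((i : ℕ) + 1) % p then 1 else 0

/-! The Fourier matrix `F = (ζ ^ (i * j))` of a primitive `p`-th root of unity `ζ` diagonalises the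
cyclic shift, `T F = F diag (ζ ^ j)`, so conjugating by the unitary `1 ⊗ F / √p` turns `W(T)` into
the block-diagonal matrix with blocks `W(ζ ^ j)`. For a Hermitian matrix the signature can be read
off the roots of the characteristic polynomial, so it is invariant under unitary conjugation and
additive over diagonal blocks. -/

noncomputable def reSig : Multiset ℂ →+ ℤ :=
  (Nat.castAddMonoidHom ℤ).comp (Multiset.countPAddMonoidHom fun z : ℂ => 0 < z.re) -
    (Nat.castAddMonoidHom ℤ).comp (Multiset.countPAddMonoidHom fun z : ℂ => z.re < 0)

section Signature

variable {m : Type*} [Fintype m] [DecidableEq m]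

theorem Matrix.IsHermitian.sig_eq_reSig_roots {A : Matrix m m ℂ} (hA : A.IsHermitian) :
    sig A = reSig A.charpoly.roots := by
  simp [sig, hA, reSig, hA.roots_charpoly_eq_eigenvalues, Finset.card,
    Multiset.countP_eq_card_filter, Multiset.filter_map]

theorem sig_eq_of_mul_eq_mul {U M B : Matrix m m ℂ} (hU : U ∈ unitaryGroup m ℂ)
    (hB : B.IsHermitian) (h : M * U = U * B) : sig M = sig B := by
  have hM : M = U * B * Uᴴ := by
    rw [← h, mul_assoc, ← star_eq_conjTranspose, mem_unitaryGroup_iff.1 hU, mul_one]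
  have hcharpoly : (U * B * Uᴴ).charpoly = B.charpoly := by
    rw [charpoly_mul_comm, ← mul_assoc, ← star_eq_conjTranspose, mem_unitaryGroup_iff'.1 hU,
      one_mul]
  rw [hM, (isHermitian_mul_mul_conjTranspose U hB).sig_eq_reSig_roots, hcharpoly,
    hB.sig_eq_reSig_roots]

theorem Matrix.charpoly_blockDiagonal {R o : Type*} [CommRing R] [Fintype o] [DecidableEq o]
    (M : o → Matrix m m R) : (blockDiagonal M).charpoly = ∏ i, (M i).charpoly := by
  have : charmatrix (blockDiagonal M) = blockDiagonal fun i => charmatrix (M i) := by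
    ext ⟨i, a⟩ ⟨j, b⟩
    by_cases a = b <;> by_cases i = j <;> simp_all [blockDiagonal_apply, Prod.ext_iff]
  rw [charpoly, this, det_blockDiagonal]
  rfl

theorem sig_blockDiagonal {o : Type*} [Fintype o] [DecidableEq o] {M : o → Matrix m m ℂ}
    (hM : ∀ i, (M i).IsHermitian) : sig (blockDiagonal M) = ∑ i, sig (M i) := by
  rw [(isHermitian_blockDiagonal_iff.2 hM).sig_eq_reSig_roots, charpoly_blockDiagonal,
    roots_prod _ _ (prod_ne_zero_iff.2 fun i _ => (charpoly_monic (M i)).ne_zero),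
    Multiset.bind, Multiset.join, map_multiset_sum, Multiset.map_map]
  simp [(hM _).sig_eq_reSig_roots]

end Signature

theorem zpow_toNat_emod_of_pow_eq_one {G₀ : Type*} [GroupWithZero G₀] {z : G₀} {p : ℕ}
    (hp : p ≠ 0) (hz : z ^ p = 1) (k : ℤ) :
    z ^ (k % p).toNat = z ^ k := by
  have hz0 : z ≠ 0 := by rintro rfl; simp [hp] at hz
  rw [← zpow_natCast, Int.toNat_of_nonneg (Int.emod_nonneg k (by exact_mod_cast hp))]
  conv_rhs => rw [← Int.emod_add_mul_ediv k p]
  rw [zpow_add₀ hz0, _root_.zpow_mul, zpow_natCast, hz, _root_.one_zpow, mul_one]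

section Fourier

def dftMatrix (ζ : ℂ) (p : ℕ) : Matrix (Fin p) (Fin p) ℂ :=
  of fun i j => ζ ^ ((i : ℕ) * j)

variable {ζ : ℂ} {p : ℕ}

theorem cyclicMatrix_mul_dftMatrix (hζ : ζ ^ p = 1) :
    cyclicMatrix p * dftMatrix ζ p =
      dftMatrix ζ p * diagonal fun j : Fin p => ζ ^ (j : ℕ) := by
  ext i j
  have hp : 0 < p := i.pos
  rw [mul_apply, Finset.sum_eq_single ⟨((i : ℕ) + 1) % p, Nat.mod_lt _ hp⟩]
  · simp only [cyclicMatrix, dftMatrix, of_apply, mul_diagonal, if_true, one_mul]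
    rw [mul_comm, pow_mul, ← pow_eq_pow_mod _ (by rw [pow_right_comm, hζ, one_pow]), ← pow_mul,
      ← pow_add]
    ring_nf
  · intro k _ hk
    simp [cyclicMatrix, Fin.ext_iff.not.1 hk]
  · simp

theorem cyclicMatrix_pow_mul_dftMatrix (hζ : ζ ^ p = 1) (e : ℕ) :
    cyclicMatrix p ^ e * dftMatrix ζ p =
      dftMatrix ζ p * diagonal fun j : Fin p => (ζ ^ (j : ℕ)) ^ e := by
  induction e with
  | zero => simp
  | succ e ih =>
    simp_rw [pow_succ', mul_assoc, ih, ← mul_assoc, cyclicMatrix_mul_dftMatrix hζ, mul_assoc,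
      diagonal_mul_diagonal]

theorem IsPrimitiveRoot.dftMatrix_mul_conjTranspose (hζ : IsPrimitiveRoot ζ p) :
    dftMatrix ζ p * (dftMatrix ζ p)ᴴ = (p : ℂ) • 1 := by
  ext i j
  have hp : p ≠ 0 := i.pos.ne'
  have hζ0 : ζ ≠ 0 := hζ.ne_zero hp
  have hstar : star ζ = ζ⁻¹ := (Complex.inv_eq_conj (hζ.norm'_eq_one hp)).symm
  set z := ζ ^ (i : ℕ) * (ζ ^ (j : ℕ))⁻¹
  have hz : z ^ p = 1 := by
    rw [mul_pow, inv_pow, ← pow_mul, ← pow_mul, mul_comm (i : ℕ), mul_comm (j : ℕ), pow_mul,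
      pow_mul, hζ.pow_eq_one, one_pow, one_pow, inv_one, mul_one]
  have hz1 : z = 1 ↔ i = j := by
    rw [mul_inv_eq_one₀ (pow_ne_zero _ hζ0)]
    exact ⟨fun h => Fin.ext (hζ.pow_inj i.isLt j.isLt h), fun h => h ▸ rfl⟩
  calc (dftMatrix ζ p * (dftMatrix ζ p)ᴴ) i j = ∑ k ∈ range p, z ^ k := by
        rw [mul_apply, ← Fin.sum_univ_eq_sum_range]
        refine Finset.sum_congr rfl fun k _ => ?_
        simp only [dftMatrix, conjTranspose_apply, of_apply, star_pow, hstar, z]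
        rw [mul_pow, inv_pow, inv_pow, ← pow_mul, ← pow_mul]
    _ = ((p : ℂ) • (1 : Matrix (Fin p) (Fin p) ℂ)) i j := by
        by_cases hij : i = j
        · simp [(hz1.2 hij), hij]
        · simp [geom_sum_eq (hz1.not.2 hij), hz, one_apply_ne hij]

theorem IsPrimitiveRoot.inv_sqrt_smul_dftMatrix_mem_unitaryGroup (hζ : IsPrimitiveRoot ζ p) :
    ((Real.sqrt p : ℂ))⁻¹ • dftMatrix ζ p ∈ unitaryGroup (Fin p) ℂ := by
  rw [mem_unitaryGroup_iff, star_smul, star_eq_conjTranspose, smul_mul_smul_comm,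
    hζ.dftMatrix_mul_conjTranspose, smul_smul]
  rcases p.eq_zero_or_pos with rfl | hp
  · exact Subsingleton.elim _ _
  have : ((Real.sqrt p : ℂ))⁻¹ * star ((Real.sqrt p : ℂ))⁻¹ * p = 1 := by
    rw [star_inv₀, Complex.star_def, Complex.conj_ofReal, ← mul_inv, ← Complex.ofReal_mul,
      Real.mul_self_sqrt (Nat.cast_nonneg p)]
    push_cast
    exact inv_mul_cancel₀ (by exact_mod_cast hp.ne')
  rw [this, one_smul]

theorem kronecker_cyclicMatrix_pow_sum_mul {n : Type*} [Fintype n] [DecidableEq n]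
    (hζ : ζ ^ p = 1) (A : ℤ → Matrix n n ℂ) (s : Finset ℤ) :
    (∑ k ∈ s, A k ⊗ₖ (cyclicMatrix p ^ (k % (p : ℤ)).toNat)) * (1 ⊗ₖ dftMatrix ζ p) =
      (1 ⊗ₖ dftMatrix ζ p) *
        blockDiagonal fun j : Fin p => ∑ k ∈ s, (ζ ^ (j : ℕ)) ^ k • A k := by
  have hterm (k : ℤ) :
      (A k ⊗ₖ (cyclicMatrix p ^ (k % (p : ℤ)).toNat)) * (1 ⊗ₖ dftMatrix ζ p) =
        (1 ⊗ₖ dftMatrix ζ p) * blockDiagonal fun j : Fin p => (ζ ^ (j : ℕ)) ^ k • A k := by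
    rw [← mul_kronecker_mul, cyclicMatrix_pow_mul_dftMatrix hζ, mul_one, ← one_mul (A k),
      mul_kronecker_mul, one_mul, kronecker_diagonal]
    congr 2
    ext j : 1
    rw [op_smul_eq_smul,
      zpow_toNat_emod_of_pow_eq_one j.pos.ne' (by rw [pow_right_comm, hζ, one_pow])]
  have hsum : (blockDiagonal fun j : Fin p => ∑ k ∈ s, (ζ ^ (j : ℕ)) ^ k • A k) =
      ∑ k ∈ s, blockDiagonal fun j : Fin p => (ζ ^ (j : ℕ)) ^ k • A k := by
    rw [← Finset.sum_fn]
    exact map_sum (blockDiagonalAddMonoidHom n n (Fin p) ℂ) _ s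
  rw [hsum, Finset.sum_mul, Finset.mul_sum]
  exact Finset.sum_congr rfl fun k _ => hterm k

end Fourier

theorem isHermitian_sum_zpow_smul {n : Type*} [Fintype n] (A : ℤ → Matrix n n ℂ)
    (hA : ∀ k, A (-k) = (A k)ᴴ) (N : ℕ) {z : ℂ} (hz : ‖z‖ = 1) :
    (∑ k ∈ Icc (-(N : ℤ)) N, z ^ k • A k).IsHermitian := by
  have hstar : star z = z⁻¹ := (Complex.inv_eq_conj hz).symm
  have hterm : ∀ k, (z ^ k • A k)ᴴ = z ^ (-k) • A (-k) := by
    intro k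
    rw [conjTranspose_smul, hA, star_zpow₀, hstar, _root_.inv_zpow']
  rw [IsHermitian, conjTranspose_sum]
  simp_rw [hterm]
  exact Finset.sum_equiv (Equiv.neg ℤ)
    (fun k => by simp only [Finset.mem_Icc, Equiv.neg_apply]; omega) (fun k _ => by simp)

theorem IsPrimitiveRoot.sum_nthRootsFinset_one {M : Type*} [AddCommMonoid M] {ζ : ℂ} {p : ℕ}
    [NeZero p] (hζ : IsPrimitiveRoot ζ p) (f : ℂ → M) :
    ∑ ω ∈ nthRootsFinset p (1 : ℂ), f ω = ∑ j : Fin p, f (ζ ^ (j : ℕ)) := by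
  have hmem (ω : ℂ) : ω ∈ nthRootsFinset p (1 : ℂ) ↔ ω ^ p = 1 :=
    Polynomial.mem_nthRootsFinset (NeZero.pos p) 1
  symm
  refine Finset.sum_bij (fun j _ => ζ ^ (j : ℕ)) (fun j _ => ?_) (fun i _ j _ h => ?_)
    (fun ω hω => ?_) (fun _ _ => rfl)
  · exact (hmem _).2 (by rw [pow_right_comm, hζ.pow_eq_one, one_pow])
  · exact Fin.ext (hζ.pow_inj i.isLt j.isLt h)
  · obtain ⟨i, hi, rfl⟩ := hζ.eq_pow_of_pow_eq_one ((hmem ω).1 hω)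
    exact ⟨⟨i, hi⟩, mem_univ _, rfl⟩

theorem stmt_5_general (n p N : ℕ) (hp : 1 ≤ p)
    (A : ℤ → Matrix (Fin n) (Fin n) ℂ)
    (hherm : ∀ k : ℤ, A (-k) = (A k)ᴴ)
    (W : ℂ → Matrix (Fin n) (Fin n) ℂ)
    (hW : ∀ z : ℂ, W z = ∑ k ∈ Finset.Icc (-(N : ℤ)) (N : ℤ), z ^ k • A k) :
    sig (∑ k ∈ Finset.Icc (-(N : ℤ)) (N : ℤ),
        A k ⊗ₖ (cyclicMatrix p ^ (k % (p : ℤ)).toNat)) =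
      ∑ ω ∈ Polynomial.nthRootsFinset p (1 : ℂ), sig (W ω) := by
  have : NeZero p := ⟨by omega⟩
  obtain ⟨ζ, hζ⟩ : ∃ ζ : ℂ, IsPrimitiveRoot ζ p :=
    ⟨_, Complex.isPrimitiveRoot_exp p (NeZero.ne p)⟩
  have hWherm : ∀ j : Fin p, (W (ζ ^ (j : ℕ))).IsHermitian := fun j => by
    rw [hW]
    exact isHermitian_sum_zpow_smul A hherm N
      (by rw [norm_pow, hζ.norm'_eq_one (NeZero.ne p), one_pow])
  have hU := kronecker_mem_unitary (one_mem (unitary (Matrix (Fin n) (Fin n) ℂ)))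
    hζ.inv_sqrt_smul_dftMatrix_mem_unitaryGroup
  rw [sig_eq_of_mul_eq_mul hU (isHermitian_blockDiagonal_iff.2 hWherm), sig_blockDiagonal hWherm,
    hζ.sum_nthRootsFinset_one]
  rw [kronecker_smul, Matrix.mul_smul, Matrix.smul_mul,
    kronecker_cyclicMatrix_pow_sum_mul hζ.pow_eq_one]
  simp_rw [hW]

theorem stmt_5 (n p N : ℕ) (hp : 1 ≤ p)
    (A : ℤ → Matrix (Fin n) (Fin n) ℂ)
    (hsupp : ∀ k : ℤ, (N : ℤ) < |k| → A k = 0)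
    (hherm : ∀ k : ℤ, A (-k) = (A k)ᴴ)
    (W : ℂ → Matrix (Fin n) (Fin n) ℂ)
    (hW : ∀ z : ℂ, W z = ∑ k ∈ Finset.Icc (-(N : ℤ)) (N : ℤ), z ^ k • A k)
    (hinv : ∀ ω : ℂ, ω ^ p = 1 → IsUnit (W ω).det) :
    sig (∑ k ∈ Finset.Icc (-(N : ℤ)) (N : ℤ),
        A k ⊗ₖ (cyclicMatrix p ^ (k % (p : ℤ)).toNat)) =
      ∑ ω ∈ Polynomial.nthRootsFinset p (1 : ℂ), sig (W ω) :=
  stmt_5_general n p N hp A hherm W hW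
end

section
/- With the notation of the clover presentation, for every t on the unit circle with t ≠ 1, the signature of W(t) equals the signature of the Hermitian matrix (1−t^{-1})A + (1−t)Aᵀ, where A is the Seifert matrix. -/
open Matrix Finset

/-!
Sylvester's law of inertia for Hermitian matrices is reduced to the one for real quadratic forms:
`x ↦ Re (x* B x)` is a real quadratic form on `ℂⁿ ≅ ℝ²ⁿ`, congruence `B ↦ P B Pᴴ` is a real
isometry of these forms, and after unitary diagonalisation `B = U D Uᴴ` the form is a weighted sum
of squares in which every eigenvalue of `B` occurs twice (once for real, once for imaginary
parts). The clover matrix `W(t)` is congruent to `(1 - t⁻¹) A + (1 - t) Aᵀ` via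
`P = diag ((1 - t) I, I)`, since `conj t = t⁻¹` on the unit circle.
-/

open QuadraticMap QuadraticForm

lemma Set.ncard_setOf_fst {α β : Type*} [Finite β] (p : α → Prop) :
    {x : α × β | p x.1}.ncard = {a | p a}.ncard * Nat.card β := by
  rw [show {x : α × β | p x.1} = {a | p a} ×ˢ Set.univ by ext; simp, Set.ncard_prod,
    Set.ncard_univ]

noncomputable def Complex.piRealEquiv (n : Type*) : (n × Fin 2 → ℝ) ≃ₗ[ℝ] (n → ℂ) :=
  (LinearEquiv.curry ℝ ℝ n (Fin 2)).trans
    (LinearEquiv.piCongrRight fun _ => Complex.basisOneI.equivFun.symm)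

lemma Complex.piRealEquiv_apply {n : Type*} (v : n × Fin 2 → ℝ) (i : n) :
    Complex.piRealEquiv n v i = ⟨v (i, 0), v (i, 1)⟩ := by
  simp [Complex.piRealEquiv, Complex.ext_iff]

namespace Matrix

variable {n : Type*} [Fintype n]

noncomputable def hermitianForm (B : Matrix n n ℂ) : QuadraticForm ℝ (n → ℂ) :=
  LinearMap.BilinMap.toQuadraticMap <| LinearMap.mk₂ ℝ (fun x y => (star x ⬝ᵥ B *ᵥ y).re)
    (fun x y z => by simp [star_add, add_dotProduct])
    (fun c x y => by simp [star_smul, smul_dotProduct])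
    (fun x y z => by simp [mulVec_add, dotProduct_add])
    (fun c x y => by simp [mulVec_smul, dotProduct_smul])

lemma hermitianForm_apply (B : Matrix n n ℂ) (x : n → ℂ) :
    hermitianForm B x = (star x ⬝ᵥ B *ᵥ x).re := rfl

lemma hermitianForm_mul_mul_conjTranspose (B P : Matrix n n ℂ) (x : n → ℂ) :
    hermitianForm (P * B * Pᴴ) x = hermitianForm B (Pᴴ *ᵥ x) := by
  simp only [hermitianForm_apply, ← mulVec_mulVec, dotProduct_mulVec (star x) P, star_mulVec,
    conjTranspose_conjTranspose]

variable [DecidableEq n]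

lemma hermitianForm_diagonal_comp_piRealEquiv (w : n → ℝ) :
    (hermitianForm (diagonal fun i => (w i : ℂ))).comp (Complex.piRealEquiv n).toLinearMap =
      weightedSumSquares ℝ fun p : n × Fin 2 => w p.1 := by
  ext v
  simp only [QuadraticMap.comp_apply, LinearEquiv.coe_coe, hermitianForm_apply, dotProduct,
    Pi.star_apply, Complex.piRealEquiv_apply, RCLike.star_def, mulVec_diagonal, Complex.re_sum,
    Complex.mul_re, Complex.conj_re, Complex.ofReal_re, Complex.ofReal_im, zero_mul, sub_zero,
    Complex.conj_im, Complex.mul_im, add_zero, neg_mul, sub_neg_eq_add, weightedSumSquares_apply,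
    smul_eq_mul, Fintype.sum_prod_type, Fin.sum_univ_two]
  exact sum_congr rfl fun _ _ => by ring

lemma equivalent_hermitianForm_diagonal (w : n → ℝ) :
    (hermitianForm (diagonal fun i => (w i : ℂ))).Equivalent
      (weightedSumSquares ℝ fun p : n × Fin 2 => w p.1) :=
  hermitianForm_diagonal_comp_piRealEquiv w ▸
    ⟨isometryEquivOfCompLinearEquiv _ (Complex.piRealEquiv n)⟩

lemma equivalent_hermitianForm_mul_mul_conjTranspose {P : Matrix n n ℂ} (hP : IsUnit P.det)
    (B : Matrix n n ℂ) : (hermitianForm (P * B * Pᴴ)).Equivalent (hermitianForm B) := by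
  have : Invertible Pᴴ := invertibleOfIsUnitDet _ (by simpa using hP.star)
  exact ⟨{ (Pᴴ.toLinearEquiv' this).restrictScalars ℝ with
    map_app' := fun x => (hermitianForm_mul_mul_conjTranspose B P x).symm }⟩

lemma IsHermitian.equivalent_hermitianForm_weightedSumSquares {B : Matrix n n ℂ}
    (hB : B.IsHermitian) : (hermitianForm B).Equivalent
      (weightedSumSquares ℝ fun p : n × Fin 2 => hB.eigenvalues p.1) := by
  set U : Matrix n n ℂ := (hB.eigenvectorUnitary : Matrix n n ℂ)
  have hB' : B = U * diagonal (fun i => (hB.eigenvalues i : ℂ)) * Uᴴ := hB.spectral_theorem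
  rw [show hermitianForm B = _ from congrArg hermitianForm hB']
  exact (equivalent_hermitianForm_mul_mul_conjTranspose (UnitaryGroup.det_isUnit _) _).trans
    (equivalent_hermitianForm_diagonal _)

lemma IsHermitian.sigPos_hermitianForm {B : Matrix n n ℂ} (hB : B.IsHermitian) :
    sigPos (hermitianForm B) = #{i | 0 < hB.eigenvalues i} * 2 := by
  rw [sigPos_of_equiv_weightedSumSquares hB.equivalent_hermitianForm_weightedSumSquares,
    Set.ncard_setOf_fst (0 < hB.eigenvalues ·), Set.ncard_eq_toFinset_card', Set.toFinset_ofPred,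
    Nat.card_fin]

lemma IsHermitian.sigNeg_hermitianForm {B : Matrix n n ℂ} (hB : B.IsHermitian) :
    sigNeg (hermitianForm B) = #{i | hB.eigenvalues i < 0} * 2 := by
  rw [sigNeg_of_equiv_weightedSumSquares hB.equivalent_hermitianForm_weightedSumSquares,
    Set.ncard_setOf_fst (hB.eigenvalues · < 0), Set.ncard_eq_toFinset_card', Set.toFinset_ofPred,
    Nat.card_fin]

lemma IsHermitian.sig_mul_two {B : Matrix n n ℂ} (hB : B.IsHermitian) :
    sig B * 2 = sigPos (hermitianForm B) - sigNeg (hermitianForm B) := by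
  rw [hB.sigPos_hermitianForm, hB.sigNeg_hermitianForm, sig, dif_pos hB]
  push_cast
  ring

lemma isHermitian_mul_mul_conjTranspose_iff {P : Matrix n n ℂ} (hP : IsUnit P.det)
    {B : Matrix n n ℂ} : (P * B * Pᴴ).IsHermitian ↔ B.IsHermitian := by
  refine ⟨fun h => ?_, isHermitian_mul_mul_conjTranspose P⟩
  have hPH : IsUnit Pᴴ.det := by simpa using hP.star
  have : B = P⁻¹ * (P * B * Pᴴ) * P⁻¹ᴴ := by
    rw [conjTranspose_nonsing_inv, ← Matrix.mul_assoc, mul_nonsing_inv_cancel_right _ _ hPH,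
      nonsing_inv_mul_cancel_left _ _ hP]
  exact this ▸ isHermitian_mul_mul_conjTranspose _ h

end Matrix

lemma sig_mul_mul_conjTranspose {n : Type*} [Fintype n] [DecidableEq n] {P : Matrix n n ℂ}
    (hP : IsUnit P.det) (B : Matrix n n ℂ) : sig (P * B * Pᴴ) = sig B := by
  by_cases hB : B.IsHermitian
  · have hPB := (isHermitian_mul_mul_conjTranspose_iff hP).mpr hB
    have hQ := equivalent_hermitianForm_mul_mul_conjTranspose hP B
    have := hPB.sig_mul_two
    rw [hQ.sigPos_eq, hQ.sigNeg_eq, ← hB.sig_mul_two] at this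
    omega
  · rw [sig, sig, dif_neg hB, dif_neg (mt (isHermitian_mul_mul_conjTranspose_iff hP).mp hB)]

section Clover

variable {m : Type*} [DecidableEq m]

lemma conjTranspose_fromBlocks_smul_one (c : ℂ) :
    (fromBlocks (c • 1) 0 0 1 : Matrix (m ⊕ m) (m ⊕ m) ℂ)ᴴ = fromBlocks (star c • 1) 0 0 1 := by
  simp [fromBlocks_conjTranspose]

lemma map_ofReal_fromBlocks_sub_one (X Y Z V : Matrix m m ℝ) :
    (fromBlocks X Y (Z - 1) V).map Complex.ofReal =
      fromBlocks (X.map Complex.ofReal) (Y.map Complex.ofReal) (Z.map Complex.ofReal - 1)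
        (V.map Complex.ofReal) := by
  rw [fromBlocks_map, Matrix.map_sub _ Complex.ofReal_sub,
    Matrix.map_one _ Complex.ofReal_zero Complex.ofReal_one]

variable [Fintype m]

lemma isUnit_det_fromBlocks_smul_one {c : ℂ} (hc : c ≠ 0) :
    IsUnit (fromBlocks (c • 1) 0 0 1 : Matrix (m ⊕ m) (m ⊕ m) ℂ).det := by
  simp only [det_fromBlocks_zero₂₁, det_smul, det_one, mul_one]
  exact hc.isUnit.pow _

lemma fromBlocks_mul_clover_mul {t : ℂ} (ht : t ≠ 0) {X Y Z V : Matrix m m ℂ}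
    (hX : Xᵀ = X) (hV : Vᵀ = V) (hYZ : Y = Zᵀ) :
    fromBlocks ((1 - t) • 1) 0 0 1 *
        fromBlocks X ((1 - t⁻¹) • Y - 1) ((1 - t) • Z - 1) ((2 - t - t⁻¹) • V) *
        fromBlocks ((1 - t⁻¹) • 1) 0 0 1 =
      (1 - t⁻¹) • fromBlocks X Y (Z - 1) V + (1 - t) • (fromBlocks X Y (Z - 1) V)ᵀ := by
  rw [fromBlocks_transpose, transpose_sub, transpose_one, ← hYZ, hX, hV, hYZ, transpose_transpose,
    fromBlocks_multiply, fromBlocks_multiply, fromBlocks_smul, fromBlocks_smul, fromBlocks_add]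
  congr 1 <;>
    simp only [Matrix.zero_mul, Matrix.mul_zero, Matrix.mul_one, Matrix.one_mul, add_zero,
      zero_add, Matrix.smul_mul, Matrix.mul_smul, Matrix.mul_sub, smul_smul, smul_sub] <;>
    match_scalars <;> field_simp <;> ring

end Clover

theorem stmt_7_general (g : ℕ)
    (Lxx Lxy Lyx Lyy : Matrix (Fin g) (Fin g) ℝ)
    (hxx : Lxxᵀ = Lxx) (hyy : Lyyᵀ = Lyy) (hxy : Lxy = Lyxᵀ)
    (A : Matrix (Fin g ⊕ Fin g) (Fin g ⊕ Fin g) ℝ)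
    (hA : A = Matrix.fromBlocks Lxx Lxy (Lyx - 1) Lyy)
    (t : ℂ) (ht : ‖t‖ = 1) (ht1 : t ≠ 1)
    (W : Matrix (Fin g ⊕ Fin g) (Fin g ⊕ Fin g) ℂ)
    (hW : W = Matrix.fromBlocks
        ((Lxx.map (Complex.ofReal)))
        ((1 - t⁻¹) • (Lxy.map (Complex.ofReal)) - 1)
        ((1 - t) • (Lyx.map (Complex.ofReal)) - 1)
        ((2 - t - t⁻¹) • (Lyy.map (Complex.ofReal)))) :
    sig W =
      sig ((1 - t⁻¹) • (A.map Complex.ofReal) +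
        (1 - t) • ((A.map Complex.ofReal)ᵀ)) := by
  have ht0 : t ≠ 0 := by rintro rfl; simp at ht
  set P : Matrix (Fin g ⊕ Fin g) (Fin g ⊕ Fin g) ℂ := fromBlocks ((1 - t) • 1) 0 0 1
  have hP : IsUnit P.det := isUnit_det_fromBlocks_smul_one (sub_ne_zero.mpr ht1.symm)
  have hPH : Pᴴ = fromBlocks ((1 - t⁻¹) • 1) 0 0 1 := by
    rw [conjTranspose_fromBlocks_smul_one, star_sub, star_one, Complex.star_def,
      ← Complex.inv_eq_conj ht]
  have hsymm (L : Matrix (Fin g) (Fin g) ℝ) (hL : Lᵀ = L) :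
      (L.map Complex.ofReal)ᵀ = L.map Complex.ofReal := by
    rw [← transpose_map, hL]
  have hcongr : (1 - t⁻¹) • A.map Complex.ofReal + (1 - t) • (A.map Complex.ofReal)ᵀ =
      P * W * Pᴴ := by
    rw [hPH, hW, fromBlocks_mul_clover_mul ht0 (hsymm Lxx hxx) (hsymm Lyy hyy)
      (by rw [hxy, transpose_map]), hA, map_ofReal_fromBlocks_sub_one]
  rw [hcongr, sig_mul_mul_conjTranspose hP]

theorem stmt_7 (g : ℕ) (hg : 1 ≤ g)
    (Lxx Lxy Lyx Lyy : Matrix (Fin g) (Fin g) ℝ)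
    (hxx : Lxxᵀ = Lxx) (hyy : Lyyᵀ = Lyy) (hxy : Lxy = Lyxᵀ)
    (A : Matrix (Fin g ⊕ Fin g) (Fin g ⊕ Fin g) ℝ)
    (hA : A = Matrix.fromBlocks Lxx Lxy (Lyx - 1) Lyy)
    (t : ℂ) (ht : ‖t‖ = 1) (ht1 : t ≠ 1)
    (W : Matrix (Fin g ⊕ Fin g) (Fin g ⊕ Fin g) ℂ)
    (hW : W = Matrix.fromBlocks
        ((Lxx.map (Complex.ofReal)))
        ((1 - t⁻¹) • (Lxy.map (Complex.ofReal)) - 1)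
        ((1 - t) • (Lyx.map (Complex.ofReal)) - 1)
        ((2 - t - t⁻¹) • (Lyy.map (Complex.ofReal)))) :
    sig W =
      sig ((1 - t⁻¹) • (A.map Complex.ofReal) +
        (1 - t) • ((A.map Complex.ofReal)ᵀ)) :=
  stmt_7_general g Lxx Lxy Lyx Lyy hxx hyy hxy A hA t ht ht1 W hW
end

section
/- Let W be a Hermitian matrix over the Laurent polynomial ring ℚ[t,t^{-1}] (with involution t ↦ t^{-1}) such that W(1) is invertible over ℤ. Define δ(W) = det(W) · det(W(1))^{-1}. Then δ is invariant under the moves W ↦ P*(W ⊕ E)P where E is a ±1 diagonal matrix and P is either an elementary matrix or a diagonal matrix with monomial entries t^{n_i}; i.e., δ(P*(W ⊕ E)P) = δ(W) up to multiplication by a unit ± t^k. -/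
open Matrix LaurentPolynomial

/-- `δ(W) = det(W) · det(W(1))⁻¹`, where `h` is evaluation at `t = 1`. -/
noncomputable def deltaInv {ι : Type*} [Fintype ι] [DecidableEq ι]
    (h : LaurentPolynomial ℚ →+* ℚ) (M : Matrix ι ι (LaurentPolynomial ℚ)) :
    LaurentPolynomial ℚ :=
  LaurentPolynomial.C ((h M.det)⁻¹) * M.det

/-- The conjugate-transpose with respect to the involution `t ↦ t⁻¹`. -/
noncomputable def lstar {ι : Type*} (M : Matrix ι ι (LaurentPolynomial ℚ)) :
    Matrix ι ι (LaurentPolynomial ℚ) :=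
  (M.map fun f => LaurentPolynomial.invert f)ᵀ

/-! The determinant of an elementary matrix is `1 = t⁰` and that of `diag(t^{nᵢ})` is `t^{∑ nᵢ}`;
in both cases `det P* = (det P)(t⁻¹)` is its inverse, so `det (P* (W ⊕ E) P) = det E · det W`
with `det E = ±1`, and this sign cancels against its value at `t = 1`. Hence `δ` is invariant on
the nose, with `ε = 1` and `k = 0`. -/

lemma det_mul_mul_of_det_mul_det_eq_one {R ι : Type*} [CommRing R] [Fintype ι] [DecidableEq ι]
    {Q A P : Matrix ι ι R} (hQP : Q.det * P.det = 1) : (Q * A * P).det = A.det := by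
  rw [det_mul, det_mul]
  linear_combination A.det * hQP

lemma prod_eq_one_or_neg_one {R ι : Type*} [CommRing R] (s : Finset ι) {f : ι → R}
    (hf : ∀ i, f i = 1 ∨ f i = -1) : (∏ i ∈ s, f i) = 1 ∨ (∏ i ∈ s, f i) = -1 := by
  refine Finset.prod_induction f (fun x => x = 1 ∨ x = -1) ?_ (Or.inl rfl) (fun i _ => hf i)
  rintro a b (rfl | rfl) (rfl | rfl) <;> simp

lemma prod_T {R ι : Type*} [CommSemiring R] (s : Finset ι) (d : ι → ℤ) :
    ∏ i ∈ s, (T (d i) : R[T;T⁻¹]) = T (∑ i ∈ s, d i) := by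
  induction s using Finset.cons_induction with
  | empty => rw [Finset.prod_empty, Finset.sum_empty, T_zero]
  | cons i s hi ih => rw [Finset.prod_cons, Finset.sum_cons, ih, T_add]

section

variable {ι : Type*} [Fintype ι] [DecidableEq ι]

lemma det_lstar (M : Matrix ι ι (LaurentPolynomial ℚ)) :
    (lstar M).det = invert M.det := by
  rw [lstar, det_transpose]
  exact ((invert : LaurentPolynomial ℚ ≃ₐ[ℚ] LaurentPolynomial ℚ).toRingHom.map_det M).symm

lemma det_lstar_mul_det_of_det_eq_T {P : Matrix ι ι (LaurentPolynomial ℚ)} {k : ℤ}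
    (hP : P.det = T k) : (lstar P).det * P.det = 1 := by
  rw [det_lstar, hP, invert_T, ← T_add, neg_add_cancel, T_zero]

lemma det_one_add_single {i j : ι} (hij : i ≠ j) (c : LaurentPolynomial ℚ) :
    (1 + single i j c).det = 1 :=
  det_transvection_of_ne i j hij c

lemma det_diagonal_T (d : ι → ℤ) :
    (diagonal fun i => (T (d i) : LaurentPolynomial ℚ)).det = T (∑ i, d i) := by
  rw [det_diagonal, prod_T]

lemma deltaInv_eq_of_det_eq_sign_mul {κ : Type*} [Fintype κ] [DecidableEq κ]
    (h : LaurentPolynomial ℚ →+* ℚ)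
    {M : Matrix ι ι (LaurentPolynomial ℚ)} {N : Matrix κ κ (LaurentPolynomial ℚ)}
    {s : LaurentPolynomial ℚ}
    (hs : s = 1 ∨ s = -1) (hdet : M.det = s * N.det) :
    deltaInv h M = deltaInv h N := by
  rcases hs with rfl | rfl
  · rw [deltaInv, deltaInv, hdet, one_mul]
  · rw [deltaInv, deltaInv, hdet, neg_one_mul, map_neg, inv_neg, map_neg, neg_mul_neg]

end

theorem stmt_18_general (n m : ℕ)
    (h : LaurentPolynomial ℚ →+* ℚ)
    (W : Matrix (Fin n) (Fin n) (LaurentPolynomial ℚ))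
    (e : Fin m → LaurentPolynomial ℚ) (he : ∀ i, e i = 1 ∨ e i = -1)
    (P : Matrix (Fin n ⊕ Fin m) (Fin n ⊕ Fin m) (LaurentPolynomial ℚ))
    (hP : (∃ (i j : Fin n ⊕ Fin m) (c : LaurentPolynomial ℚ), i ≠ j ∧
            P = 1 + Matrix.single i j c) ∨
          (∃ d : Fin n ⊕ Fin m → ℤ,
            P = Matrix.diagonal fun i => LaurentPolynomial.T (d i))) :
    ∃ (ε : ℚ) (k : ℤ), (ε = 1 ∨ ε = -1) ∧
      deltaInv h (lstar P * Matrix.fromBlocks W 0 0 (Matrix.diagonal e) * P) =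
        LaurentPolynomial.C ε * LaurentPolynomial.T k * deltaInv h W := by
  have hPP : (lstar P).det * P.det = 1 := by
    rcases hP with ⟨i, j, c, hij, rfl⟩ | ⟨d, rfl⟩
    · exact det_lstar_mul_det_of_det_eq_T ((det_one_add_single hij c).trans T_zero.symm)
    · exact det_lstar_mul_det_of_det_eq_T (det_diagonal_T d)
  have hdet : (lstar P * fromBlocks W 0 0 (diagonal e) * P).det = (∏ i, e i) * W.det := by
    rw [det_mul_mul_of_det_mul_det_eq_one hPP, det_fromBlocks_zero₁₂, det_diagonal, mul_comm]
  refine ⟨1, 0, Or.inl rfl, ?_⟩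
  rw [_root_.map_one, T_zero, one_mul, one_mul]
  exact deltaInv_eq_of_det_eq_sign_mul h (prod_eq_one_or_neg_one _ he) hdet

theorem stmt_18 (n m : ℕ)
    (h : LaurentPolynomial ℚ →+* ℚ)
    (hC : ∀ a : ℚ, h (LaurentPolynomial.C a) = a)
    (hT : ∀ k : ℤ, h (LaurentPolynomial.T k) = 1)
    (W : Matrix (Fin n) (Fin n) (LaurentPolynomial ℚ))
    (hherm : lstar W = W)
    (hW1 : h W.det = 1 ∨ h W.det = -1)
    (e : Fin m → LaurentPolynomial ℚ) (he : ∀ i, e i = 1 ∨ e i = -1)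
    (P : Matrix (Fin n ⊕ Fin m) (Fin n ⊕ Fin m) (LaurentPolynomial ℚ))
    (hP : (∃ (i j : Fin n ⊕ Fin m) (c : LaurentPolynomial ℚ), i ≠ j ∧
            P = 1 + Matrix.single i j c) ∨
          (∃ d : Fin n ⊕ Fin m → ℤ,
            P = Matrix.diagonal fun i => LaurentPolynomial.T (d i))) :
    ∃ (ε : ℚ) (k : ℤ), (ε = 1 ∨ ε = -1) ∧
      deltaInv h (lstar P * Matrix.fromBlocks W 0 0 (Matrix.diagonal e) * P) =
        LaurentPolynomial.C ε * LaurentPolynomial.T k * deltaInv h W :=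
  stmt_18_general n m h W e he P hP
end
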